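/- For every n ≥ 0, the term B^n B is βη-equivalent to λx1.…λx_{n+3}. x1 x2 … x_{n+1} (x_{n+2} x_{n+3}). -/

import Mathlib

/-- Untyped lambda terms in de Bruijn representation. -/
inductive Lam where
  | var : Nat → Lam
  | app : Lam → Lam → Lam
  | lam : Lam → Lam
deriving DecidableEq

namespace Lam

/-- Lift (shift by one) all free variables with index ≥ `c`. -/
def lift (c : Nat) : Lam → Lam
  | var n => if n < c then var n else var (n + 1)
  | app a b => app (lift c a) (lift c b)
  | lam a => lam (lift (c + 1) a)

/-- Substitute `s` for the free variable with index `d`. -/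
def subst (d : Nat) (s : Lam) : Lam → Lam
  | var n => if n = d then s else if d < n then var (n - 1) else var n
  | app a b => app (subst d s a) (subst d s b)
  | lam a => lam (subst (d + 1) (lift 0 s) a)

/-- One-step βη-reduction (compatible closure of β and η). -/
inductive Step : Lam → Lam → Prop
  | beta (a b : Lam) : Step (app (lam a) b) (subst 0 b a)
  | eta (a : Lam) : Step (lam (app (lift 0 a) (var 0))) a
  | appL {a a' : Lam} (b : Lam) : Step a a' → Step (app a b) (app a' b)
  | appR (a : Lam) {b b' : Lam} : Step b b' → Step (app a b) (app a b')
  | xi {a a' : Lam} : Step a a' → Step (lam a) (lam a')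

/-- βη-equivalence: the equivalence relation generated by one-step βη-reduction. -/
def BetaEtaEq (a b : Lam) : Prop := Relation.EqvGen Step a b

/-- The B combinator λf.λg.λx. f (g x). -/
def B : Lam := lam (lam (lam (app (var 2) (app (var 1) (var 0)))))

/-- `flat X n` is the (n+1)-fold flat left application, i.e. `X_(n+1)`:
`flat X 0 = X = X_(1)` and `flat X (n+1) = (flat X n) X = X_(n+2)`. -/
def flat (X : Lam) : Nat → Lam
  | 0 => X
  | n + 1 => app (flat X n) X

end Lam

open Lam

/-- `bpow k e` is the k-fold application B (B (… (B e)…)). -/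
def bpow : ℕ → Lam → Lam
  | 0, e => e
  | k + 1, e => app B (bpow k e)

/-- k-fold lambda abstraction. -/
def lams : ℕ → Lam → Lam
  | 0, t => t
  | k + 1, t => lam (lams k t)

/-- `spine top k` is the left-nested application (var top) (var (top-1)) … (var (top-k)). -/
def spine (top : ℕ) : ℕ → Lam
  | 0 => var top
  | k + 1 => app (spine top k) (var (top - (k + 1)))

/-! Each application of `B` to the normal form `λx₁…x_{n+3}. x₁ x₂ … x_{n+1} (x_{n+2} x_{n+3})`
is two β-steps away from the next one: `B T →β λg x. T (g x)`, and feeding `g x` to `T` as its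
first argument makes `g x` the new head of the spine, which after renaming is the normal form
with one more leading variable. -/

theorem Relation.EqvGen.lift {α β : Type*} {r : α → α → Prop} {p : β → β → Prop} (f : α → β)
    (h : ∀ a b, r a b → p (f a) (f b)) {a b : α} (hab : EqvGen r a b) : EqvGen p (f a) (f b) := by
  induction hab with
  | rel x y hxy => exact .rel _ _ (h x y hxy)
  | refl x => exact .refl _
  | symm x y _ ih => exact .symm _ _ ih
  | trans x y z _ _ ih₁ ih₂ => exact .trans _ _ _ ih₁ ih₂

namespace Lam

theorem BetaEtaEq.app_right (a : Lam) {b b' : Lam} (h : BetaEtaEq b b') :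
    BetaEtaEq (app a b) (app a b') :=
  Relation.EqvGen.lift (app a) (fun _ _ => Step.appR a) h

theorem iterate_lift_zero_var (k m : ℕ) : (lift 0)^[k] (var m) = var (m + k) := by
  induction k generalizing m with
  | zero => rfl
  | succ k ih =>
    rw [Function.iterate_succ_apply, lift, if_neg (Nat.not_lt_zero m), ih, Nat.add_right_comm,
      Nat.add_assoc]

theorem iterate_lift_zero_app (k : ℕ) (a b : Lam) :
    (lift 0)^[k] (app a b) = app ((lift 0)^[k] a) ((lift 0)^[k] b) := by
  induction k generalizing a b with
  | zero => rfl
  | succ k ih => simp only [Function.iterate_succ_apply, lift, ih]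

end Lam

theorem lift_lams (c k : ℕ) (t : Lam) : lift c (lams k t) = lams k (lift (c + k) t) := by
  induction k generalizing c with
  | zero => rfl
  | succ k ih => simp only [lams, lift, ih, Nat.add_right_comm, Nat.add_assoc]

theorem subst_lams (d k : ℕ) (s t : Lam) :
    subst d s (lams k t) = lams k (subst (d + k) ((lift 0)^[k] s) t) := by
  induction k generalizing d s with
  | zero => rfl
  | succ k ih =>
    simp only [lams, subst, ih, Function.iterate_succ_apply, Nat.add_right_comm, Nat.add_assoc]

theorem Lam.Step.app_lams (k : ℕ) (t s : Lam) :
    Step (app (lams (k + 1) t) s) (lams k (subst k ((lift 0)^[k] s) t)) := by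
  have h := Step.beta (lams k t) s
  rwa [subst_lams, Nat.zero_add] at h

theorem lift_spine {c top : ℕ} (k : ℕ) (h : top < c) : lift c (spine top k) = spine top k := by
  induction k with
  | zero => simp [spine, lift, h]
  | succ k ih => simp only [spine, lift, ih]; rw [if_pos (by omega)]

/-- `0 < top` keeps the truncated indices `top - j` of the arguments below `top`, so only the
head is replaced. -/
theorem subst_spine {top : ℕ} (k : ℕ) (h : 0 < top) :
    subst top (app (var (top + 1)) (var top)) (spine top k) = spine (top + 1) (k + 1) := by
  induction k with
  | zero => simp [spine, subst]
  | succ k ih =>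
    simp only [spine, subst, ih]
    rw [if_neg (by omega), if_neg (by omega), show top + 1 - (k + 1 + 1) = top - (k + 1) by omega]

def bpowNF (n : ℕ) : Lam := lams (n + 3) (app (spine (n + 2) n) (app (var 1) (var 0)))

theorem lift_bpowNF (c n : ℕ) : lift c (bpowNF n) = bpowNF n := by
  simp only [bpowNF, lift_lams, lift, lift_spine n (show n + 2 < c + (n + 3) by omega)]
  rw [if_pos (by omega), if_pos (by omega)]

theorem Lam.Step.B_app {t : Lam} (ht : lift 0 t = t) :
    Step (app B t) (lam (lam (app t (app (var 1) (var 0))))) := by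
  simpa [B, subst, ht] using Step.beta (lam (lam (app (var 2) (app (var 1) (var 0))))) t

theorem Lam.Step.bpowNF_app (n : ℕ) :
    Step (app (bpowNF n) (app (var 1) (var 0)))
      (lams (n + 2) (app (spine (n + 3) (n + 1)) (app (var 1) (var 0)))) := by
  have hsubst : subst (n + 2) ((lift 0)^[n + 2] (app (var 1) (var 0)))
      (app (spine (n + 2) n) (app (var 1) (var 0)))
        = app (spine (n + 3) (n + 1)) (app (var 1) (var 0)) := by
    simp only [iterate_lift_zero_app, iterate_lift_zero_var, subst]
    rw [if_neg (by omega), if_neg (by omega), if_neg (by omega), if_neg (by omega),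
      show 1 + (n + 2) = n + 2 + 1 by omega, Nat.zero_add, subst_spine n (by omega)]
  rw [← hsubst]
  exact Step.app_lams (n + 2) _ _

theorem Lam.BetaEtaEq.B_app_bpowNF (n : ℕ) : BetaEtaEq (app B (bpowNF n)) (bpowNF (n + 1)) :=
  .trans _ _ _ (.rel _ _ (Step.B_app (lift_bpowNF 0 n)))
    (.rel _ _ (Step.xi (Step.xi (Step.bpowNF_app n))))

/-- For every n ≥ 0, B^n B is βη-equivalent to
λx1.…λx_{n+3}. x1 x2 … x_{n+1} (x_{n+2} x_{n+3}). -/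
theorem stmt15 (n : ℕ) :
    BetaEtaEq (bpow n B)
      (lams (n + 3) (app (spine (n + 2) n) (app (var 1) (var 0)))) := by
  induction n with
  | zero => exact .refl _
  | succ n ih => exact .trans _ _ _ (BetaEtaEq.app_right B ih) (BetaEtaEq.B_app_bpowNF n)
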